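/- Let r, q, σ, T be real with σ > 0, T > 0, let τ ∈ (0,T), let ρ > 0, and let f : (0,∞) × (0,T) → ℝ be continuous in its first variable at 1/ρ. Suppose W = W(x,·) is twice continuously differentiable in x and differentiable in τ on {x : 1/ρ < x < 1/ρ + δ} for some δ > 0 and satisfies ∂_τ W − (σ²/2)·(x²·∂²_x W + 2x·∂_x W) + (r−q)·x·∂_x W − f(x, T−τ)·(W + x·∂_x W) + r·W = 0 there, and that as x → (1/ρ)⁺ the following limits hold: W(x,τ) → ρ − 1, x·∂_x W(x,τ) → −ρ, ∂_τ W(x,τ) → 0, and x²·∂²_x W(x,τ) → L for some L ∈ ℝ. Then q·ρ − r + f(1/ρ, T−τ) = (σ²/2)·(L − 2ρ). -/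

import Mathlib

open Real Filter Topology

/- At the free boundary every coefficient of the PDE has a one-sided limit, so the residual of
the PDE tends to a polynomial expression in these limits; the residual vanishes near the
boundary, hence so does that expression, and with the smooth-pasting values it is the
constraint. -/

theorem residual_limit_eq_zero_of_eventually_eq_zero {α : Type*} {l : Filter α} [l.NeBot]
    (σ r q : ℝ) {Wτ x2Wxx xWx W g : α → ℝ} {a b c d e : ℝ}
    (hWτ : Tendsto Wτ l (𝓝 a)) (hx2Wxx : Tendsto x2Wxx l (𝓝 b)) (hxWx : Tendsto xWx l (𝓝 c))
    (hW : Tendsto W l (𝓝 d)) (hg : Tendsto g l (𝓝 e))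
    (hres : ∀ᶠ x in l, Wτ x - σ ^ 2 / 2 * (x2Wxx x + 2 * xWx x) + (r - q) * xWx x
      - g x * (W x + xWx x) + r * W x = 0) :
    a - σ ^ 2 / 2 * (b + 2 * c) + (r - q) * c - e * (d + c) + r * d = 0 :=
  tendsto_nhds_unique_of_eventuallyEq
    ((((hWτ.sub ((hx2Wxx.add (hxWx.const_mul 2)).const_mul _)).add (hxWx.const_mul _)).sub
      (hg.mul (hW.add hxWx))).add (hW.const_mul r))
    tendsto_const_nhds hres

theorem free_boundary_algebraic_constraint (r q σ T τ ρ δ L : ℝ)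
    (hδ : 0 < δ)
    (f : ℝ → ℝ → ℝ) (hf : ContinuousAt (fun x => f x (T - τ)) (1 / ρ))
    (W : ℝ → ℝ → ℝ)
    (hPDE : ∀ x ∈ Set.Ioo (1 / ρ) (1 / ρ + δ),
      deriv (fun τ' : ℝ => W x τ') τ
        - σ ^ 2 / 2 * (x ^ 2 * deriv (deriv (fun x' : ℝ => W x' τ)) x
            + 2 * x * deriv (fun x' : ℝ => W x' τ) x)
        + (r - q) * x * deriv (fun x' : ℝ => W x' τ) x
        - f x (T - τ) * (W x τ + x * deriv (fun x' : ℝ => W x' τ) x)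
        + r * W x τ = 0)
    (h1 : Tendsto (fun x => W x τ) (𝓝[>] (1 / ρ)) (𝓝 (ρ - 1)))
    (h2 : Tendsto (fun x => x * deriv (fun x' : ℝ => W x' τ) x) (𝓝[>] (1 / ρ)) (𝓝 (-ρ)))
    (h3 : Tendsto (fun x => deriv (fun τ' : ℝ => W x τ') τ) (𝓝[>] (1 / ρ)) (𝓝 0))
    (h4 : Tendsto (fun x => x ^ 2 * deriv (deriv (fun x' : ℝ => W x' τ)) x)
      (𝓝[>] (1 / ρ)) (𝓝 L)) :
    q * ρ - r + f (1 / ρ) (T - τ) = σ ^ 2 / 2 * (L - 2 * ρ) := by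
  have key := residual_limit_eq_zero_of_eventually_eq_zero σ r q h3 h4 h2 h1
    (hf.tendsto.mono_left nhdsWithin_le_nhds) ?_
  · linarith
  filter_upwards [Ioo_mem_nhdsGT (lt_add_of_pos_right (1 / ρ) hδ)] with x hx
  rw [← hPDE x hx]
  ring
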